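/- arXiv:1707.03556 — 3 statements merged into one kernel-verified Lean document; each statement's English description precedes it below -/
import Mathlib

section
/- A vertex u belongs to the k-core of a finite graph G if and only if the limiting Warning Propagation mark μ_u(G) equals 1. Moreover, an edge {v,w} of G joins two vertices of the k-core if and only if μ_{v→w}(G) = μ_{w→v}(G) = 1. -/
/-- Warning Propagation messages: `wpMsg G k t v w` is the message sent from `v` to `w`
at time `t`; initially all messages are `true` (i.e. 1), and
μ_{v→w}(t+1) = 1{∑_{u ∈ ∂v \ {w}} μ_{u→v}(t) ≥ k-1}. -/
def wpMsg {V : Type*} [Fintype V] [DecidableEq V] (G : SimpleGraph V) [DecidableRel G.Adj]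
    (k : ℕ) : ℕ → V → V → Bool
  | 0, _, _ => true
  | t+1, v, w =>
      decide (k - 1 ≤ (Finset.univ.filter fun u => G.Adj u v ∧ u ≠ w ∧ wpMsg G k t u v = true).card)

/-- `coreMember G k u`: u belongs to the k-core, i.e. to some (hence to the largest)
subgraph of minimum degree at least k. -/
def coreMember {V : Type*} [Fintype V] [DecidableEq V] (G : SimpleGraph V) [DecidableRel G.Adj]
    (k : ℕ) (u : V) : Prop :=
  ∃ S : Finset V, u ∈ S ∧ ∀ v ∈ S, k ≤ (S.filter fun w => G.Adj v w).card

/-!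
Core vertices send `true` forever: a vertex of a subgraph of minimum degree `k` receives `true`
from its at least `k` neighbours inside that subgraph, by induction on time. Conversely, at a
fixed point of Warning Propagation the marked vertices themselves span a subgraph of minimum
degree `k`: a neighbour sending `true` to a marked vertex `v` receives `true` from `v` as well,
and together with the `k - 1` other `true` messages it needed in order to send, it is marked.
-/

lemma le_card_of_le_card_erase {α : Type*} [DecidableEq α] {k : ℕ} {s : Finset α} {w : α}
    (hw : w ∈ s) (h : k - 1 ≤ (s.erase w).card) : k ≤ s.card := by
  rw [Finset.card_erase_of_mem hw] at h
  have := Finset.card_pos.mpr ⟨w, hw⟩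
  omega

section WarningPropagation

variable {V : Type*} [Fintype V] [DecidableEq V] (G : SimpleGraph V) [DecidableRel G.Adj] (k : ℕ)

/-- `v` is marked at time `t` iff it has at least `k` senders. -/
def wpSenders (t : ℕ) (v : V) : Finset V :=
  Finset.univ.filter fun u => G.Adj u v ∧ wpMsg G k t u v = true

variable {G k}

@[simp]
lemma mem_wpSenders {t : ℕ} {u v : V} :
    u ∈ wpSenders G k t v ↔ G.Adj u v ∧ wpMsg G k t u v = true := by
  simp [wpSenders]

lemma wpMsg_succ_eq_true_iff {t : ℕ} {v w : V} :
    wpMsg G k (t + 1) v w = true ↔ k - 1 ≤ ((wpSenders G k t v).erase w).card := by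
  have h : (Finset.univ.filter fun u => G.Adj u v ∧ u ≠ w ∧ wpMsg G k t u v = true) =
      (wpSenders G k t v).erase w := by
    ext u
    simp only [Finset.mem_filter, Finset.mem_univ, Finset.mem_erase, mem_wpSenders]
    tauto
  simp [wpMsg, h]

lemma wpMsg_eq_true_of_coreMember (t : ℕ) {v : V} (hv : coreMember G k v) (w : V) :
    wpMsg G k t v w = true := by
  induction t generalizing v w with
  | zero => rfl
  | succ t ih =>
    obtain ⟨S, hvS, hS⟩ := hv
    have hsub : S.filter (G.Adj v) ⊆ wpSenders G k t v := fun u hu => by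
      rw [Finset.mem_filter] at hu
      exact mem_wpSenders.mpr ⟨hu.2.symm, ih ⟨S, hu.1, hS⟩ v⟩
    rw [wpMsg_succ_eq_true_iff]
    calc k - 1 ≤ (S.filter (G.Adj v)).card - 1 := Nat.sub_le_sub_right (hS v hvS) 1
      _ ≤ ((S.filter (G.Adj v)).erase w).card := Finset.pred_card_le_card_erase
      _ ≤ _ := Finset.card_le_card (Finset.erase_subset_erase w hsub)

lemma le_card_wpSenders_of_coreMember (t : ℕ) {v : V} (hv : coreMember G k v) :
    k ≤ (wpSenders G k t v).card := by
  obtain ⟨S, hvS, hS⟩ := hv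
  have hsub : S.filter (G.Adj v) ⊆ wpSenders G k t v := fun u hu => by
    rw [Finset.mem_filter] at hu
    exact mem_wpSenders.mpr ⟨hu.2.symm, wpMsg_eq_true_of_coreMember t ⟨S, hu.1, hS⟩ v⟩
  exact (hS v hvS).trans (Finset.card_le_card hsub)

section FixedPoint

variable {T : ℕ}

lemma wpMsg_eq_true_iff_of_fixedPoint (hT : wpMsg G k (T + 1) = wpMsg G k T) {v w : V} :
    wpMsg G k T v w = true ↔ k - 1 ≤ ((wpSenders G k T v).erase w).card := by
  rw [← hT, wpMsg_succ_eq_true_iff]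

lemma wpMsg_eq_true_of_le_card_wpSenders (hT : wpMsg G k (T + 1) = wpMsg G k T) {v : V}
    (hv : k ≤ (wpSenders G k T v).card) (w : V) : wpMsg G k T v w = true :=
  (wpMsg_eq_true_iff_of_fixedPoint hT).mpr
    ((Nat.sub_le_sub_right hv 1).trans Finset.pred_card_le_card_erase)

lemma le_card_wpSenders_of_wpMsg (hT : wpMsg G k (T + 1) = wpMsg G k T) {v w : V}
    (hadj : G.Adj w v) (hvw : wpMsg G k T v w = true) (hwv : wpMsg G k T w v = true) :
    k ≤ (wpSenders G k T v).card :=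
  le_card_of_le_card_erase (mem_wpSenders.mpr ⟨hadj, hwv⟩)
    ((wpMsg_eq_true_iff_of_fixedPoint hT).mp hvw)

lemma coreMember_of_le_card_wpSenders (hT : wpMsg G k (T + 1) = wpMsg G k T) {u : V}
    (hu : k ≤ (wpSenders G k T u).card) : coreMember G k u := by
  refine ⟨Finset.univ.filter fun v => k ≤ (wpSenders G k T v).card, by simpa using hu, ?_⟩
  intro v hv
  rw [Finset.mem_filter] at hv
  have hsub : wpSenders G k T v ⊆
      (Finset.univ.filter fun v => k ≤ (wpSenders G k T v).card).filter (G.Adj v) := by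
    intro w hw
    obtain ⟨hadj, hwv⟩ := mem_wpSenders.mp hw
    have hvw := wpMsg_eq_true_of_le_card_wpSenders hT hv.2 w
    simpa [hadj.symm] using le_card_wpSenders_of_wpMsg hT hadj.symm hwv hvw
  exact hv.2.trans (Finset.card_le_card hsub)

theorem coreMember_iff_le_card_wpSenders (hT : wpMsg G k (T + 1) = wpMsg G k T) {u : V} :
    coreMember G k u ↔ k ≤ (wpSenders G k T u).card :=
  ⟨le_card_wpSenders_of_coreMember T, coreMember_of_le_card_wpSenders hT⟩

end FixedPoint

end WarningPropagation

theorem stmt11_general {V : Type*} [Fintype V] [DecidableEq V] (G : SimpleGraph V) [DecidableRel G.Adj]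
    (k : ℕ) (T : ℕ) (hT : ∀ t, T ≤ t → wpMsg G k t = wpMsg G k T) :
    (∀ u : V, coreMember G k u ↔
      k ≤ (Finset.univ.filter fun w => G.Adj w u ∧ wpMsg G k T w u = true).card) ∧
    (∀ v w : V, G.Adj v w →
      ((coreMember G k v ∧ coreMember G k w) ↔
        (wpMsg G k T v w = true ∧ wpMsg G k T w v = true))) := by
  have hfix : wpMsg G k (T + 1) = wpMsg G k T := hT (T + 1) T.le_succ
  refine ⟨fun u => coreMember_iff_le_card_wpSenders hfix, fun v w hadj => ⟨?_, ?_⟩⟩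
  · rintro ⟨hv, hw⟩
    exact ⟨wpMsg_eq_true_of_coreMember T hv w, wpMsg_eq_true_of_coreMember T hw v⟩
  · rintro ⟨hvw, hwv⟩
    exact ⟨coreMember_of_le_card_wpSenders hfix <|
        le_card_wpSenders_of_wpMsg hfix hadj.symm hvw hwv,
      coreMember_of_le_card_wpSenders hfix <| le_card_wpSenders_of_wpMsg hfix hadj hwv hvw⟩

/-- u belongs to the k-core iff the limiting WP mark μ_u(G) = 1, and an edge
{v,w} joins two vertices of the k-core iff μ_{v→w}(G) = μ_{w→v}(G) = 1.  Here `T` is a time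
from which the messages have stabilised, so `wpMsg G k T` is the limit. -/
theorem stmt11 {V : Type*} [Fintype V] [DecidableEq V] (G : SimpleGraph V) [DecidableRel G.Adj]
    (k : ℕ) (hk : 3 ≤ k) (T : ℕ) (hT : ∀ t, T ≤ t → wpMsg G k t = wpMsg G k T) :
    (∀ u : V, coreMember G k u ↔
      k ≤ (Finset.univ.filter fun w => G.Adj w u ∧ wpMsg G k T w u = true).card) ∧
    (∀ v w : V, G.Adj v w →
      ((coreMember G k v ∧ coreMember G k w) ↔
        (wpMsg G k T v w = true ∧ wpMsg G k T w v = true))) :=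
  stmt11_general G k T hT
end

section
/- Let G be a finite graph with limiting Warning Propagation messages μ_{v→w}(G). Define d_{G,ab}(v) as the number of neighbours w of v with μ_{w→v}(G)=a and μ_{v→w}(G)=b. Then: (1) v ∈ N_0(G) iff d_{G,10}(v) ≤ k-2 and d_{G,11}(v) = d_{G,01}(v) = 0; (2) v ∈ N_⋆(G) iff d_{G,10}(v) = k-1 and d_{G,11}(v) = d_{G,00}(v) = 0; (3) v ∈ N_1(G) iff d_{G,11}(v) ≥ k and d_{G,10}(v) = d_{G,00}(v) = 0. -/
namespace WarningPropagation

open Finset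

variable {V : Type*} [Fintype V] (G : SimpleGraph V) [DecidableRel G.Adj]

def inCount (μ : V → V → Bool) (v : V) : ℕ := #{u | G.Adj u v ∧ μ u v = true}

theorem card_filter_adj_true_eq_inCount (μ : V → V → Bool) (v : V) :
    #{w | G.Adj v w ∧ μ w v = true} = inCount G μ v := by
  simp only [inCount, G.adj_comm]

variable [DecidableEq V]

def IsFixedPoint (k : ℕ) (μ : V → V → Bool) : Prop :=
  ∀ v w, μ v w = decide (k - 1 ≤ #{u | G.Adj u v ∧ u ≠ w ∧ μ u v = true})

variable {G}

theorem isFixedPoint_wpMsg {k T : ℕ} (hT : wpMsg G k (T + 1) = wpMsg G k T) :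
    IsFixedPoint G k (wpMsg G k T) := by
  intro v w
  conv_lhs => rw [← hT]
  rfl

namespace IsFixedPoint

variable {k : ℕ} {μ : V → V → Bool}

theorem apply_eq (hμ : IsFixedPoint G k μ) {v w : V} (hvw : G.Adj v w) :
    μ v w = decide (k - 1 ≤ inCount G μ v - (μ w v).toNat) := by
  have herase : ({u | G.Adj u v ∧ u ≠ w ∧ μ u v = true} : Finset V)
      = ({u | G.Adj u v ∧ μ u v = true} : Finset V).erase w := by
    ext u
    simp only [mem_filter, mem_erase, mem_univ, true_and]
    tauto
  rw [hμ v w, herase, inCount]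
  cases hwv : μ w v
  · rw [erase_eq_of_notMem (by simp [hwv])]
    rfl
  · rw [card_erase_of_mem (by simp [hwv, hvw.symm])]
    rfl

theorem card_filter_eq (hμ : IsFixedPoint G k μ) (v : V) (a b : Bool) :
    #{w | G.Adj v w ∧ μ w v = a ∧ μ v w = b} =
      if decide (k - 1 ≤ inCount G μ v - a.toNat) = b then #{w | G.Adj v w ∧ μ w v = a} else 0 := by
  split_ifs with hb
  · congr 1
    ext w
    simp only [mem_filter, mem_univ, true_and]
    constructor
    · rintro ⟨hvw, hwv, -⟩
      exact ⟨hvw, hwv⟩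
    · rintro ⟨hvw, rfl⟩
      exact ⟨hvw, rfl, hμ.apply_eq hvw ▸ hb⟩
  · rw [card_eq_zero, filter_eq_empty_iff]
    rintro w - ⟨hvw, rfl, rfl⟩
    exact hb (hμ.apply_eq hvw).symm

end IsFixedPoint

end WarningPropagation

/-- with μ the limiting WP messages (stabilised at time T) and
d_{G,ab}(v) the number of neighbours w of v with μ_{w→v}=a, μ_{v→w}=b:
(1) v ∈ N_0 iff d_{10}(v) ≤ k-2 and d_{11}(v)=d_{01}(v)=0;
(2) v ∈ N_⋆ iff d_{10}(v) = k-1 and d_{11}(v)=d_{00}(v)=0;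
(3) v ∈ N_1 iff d_{11}(v) ≥ k and d_{10}(v)=d_{00}(v)=0. -/
theorem stmt14 {V : Type*} [Fintype V] [DecidableEq V] (G : SimpleGraph V) [DecidableRel G.Adj]
    (k : ℕ) (hk : 3 ≤ k) (T : ℕ) (hT : ∀ t, T ≤ t → wpMsg G k t = wpMsg G k T)
    (dab : Bool → Bool → V → ℕ)
    (hdab : ∀ a b v, dab a b v = (Finset.univ.filter fun w =>
      G.Adj v w ∧ wpMsg G k T w v = a ∧ wpMsg G k T v w = b).card)
    (indeg : V → ℕ)
    (hindeg : ∀ v, indeg v =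
      (Finset.univ.filter fun u => G.Adj u v ∧ wpMsg G k T u v = true).card) :
    ∀ v : V,
      (indeg v ≤ k-2 ↔ (dab true false v ≤ k-2 ∧ dab true true v = 0 ∧ dab false true v = 0)) ∧
      (indeg v = k-1 ↔ (dab true false v = k-1 ∧ dab true true v = 0 ∧ dab false false v = 0)) ∧
      (k ≤ indeg v ↔ (k ≤ dab true true v ∧ dab true false v = 0 ∧ dab false false v = 0)) := by
  intro v
  have hμ := WarningPropagation.isFixedPoint_wpMsg (hT (T + 1) T.le_succ)
  have hindeg_v : indeg v = WarningPropagation.inCount G (wpMsg G k T) v := hindeg v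
  simp only [hindeg_v, hdab, hμ.card_filter_eq,
    WarningPropagation.card_filter_adj_true_eq_inCount, Bool.toNat_true,
    Bool.toNat_false, Nat.sub_zero, decide_eq_true_eq, decide_eq_false_iff_not]
  split_ifs <;> omega
end

section
/- Let f_k(x) = ∑_{j=0}^{k-2} ((dp)^j/((1-p)·j!·exp(dp)))·P[Po(d(1-p)x) ≥ k-1-j] for x ∈ [0,1]. If p ∈ (0,1) is the largest fixed point of φ_{d,k} and dp ≥ k-2 and f_k'(0) < 1, then f_k is monotonically increasing and concave on [0,∞), f_k' < 1 on [0,∞), and consequently f_k(x) < x for all x ∈ (0,1]. -/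
/-!
Write `q = dp`, `a = d(1-p)` and `n = k - 2`. The coefficients of `f_k` are `P[Po(q) = j] / (1-p)`,
and differentiating the Poisson tails term by term turns `f_k'` into a convolution of Poisson
weights: `f_k'(x) = d · P[Po(q + a x) = n]`. As `t ↦ P[Po(t) = n]` decreases for `t ≥ n` and
`q ≥ n`, the derivative is nonnegative and decreasing on `[0, ∞)`. So `f_k` is monotone and concave,
`f_k' ≤ f_k'(0) < 1`, and since `f_k(0) = 0` the mean value theorem gives `f_k(x) < x` for `x > 0`.
-/

open Real Finset
open scoped Nat

/-- `poissonProb m t = P[Po(t) = m]`. -/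
noncomputable def poissonProb (m : ℕ) (t : ℝ) : ℝ := exp (-t) * t ^ m / m !

/-- `poissonTail m t = P[Po(t) ≥ m]`. -/
noncomputable def poissonTail (m : ℕ) (t : ℝ) : ℝ := 1 - exp (-t) * ∑ i ∈ range m, t ^ i / i !

lemma poissonProb_nonneg (m : ℕ) {t : ℝ} (ht : 0 ≤ t) : 0 ≤ poissonProb m t := by
  unfold poissonProb
  positivity

lemma hasDerivAt_sum_range_pow_div_factorial (m : ℕ) (t : ℝ) :
    HasDerivAt (fun t : ℝ => ∑ i ∈ range (m + 1), t ^ i / i !) (∑ i ∈ range m, t ^ i / i !) t := by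
  induction m with
  | zero => simpa using hasDerivAt_const t (1 : ℝ)
  | succ m ih =>
    simp_rw [sum_range_succ _ (m + 1)]
    refine (ih.add ((hasDerivAt_pow (m + 1) t).div_const ((m + 1)! : ℝ))).congr_deriv ?_
    rw [sum_range_succ _ m, Nat.factorial_succ, Nat.add_sub_cancel]
    push_cast
    field_simp

lemma hasDerivAt_poissonTail (m : ℕ) (t : ℝ) :
    HasDerivAt (poissonTail (m + 1)) (poissonProb m t) t := by
  refine (((hasDerivAt_neg t).exp.mul
    (hasDerivAt_sum_range_pow_div_factorial m t)).const_sub 1).congr_deriv ?_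
  rw [sum_range_succ, poissonProb]
  ring

lemma poissonTail_succ_zero (m : ℕ) : poissonTail (m + 1) 0 = 0 := by
  simp [poissonTail, sum_range_succ']

lemma sum_poissonProb_mul_poissonProb (n : ℕ) (s t : ℝ) :
    ∑ j ∈ range (n + 1), poissonProb j s * poissonProb (n - j) t = poissonProb n (s + t) := by
  simp only [poissonProb]
  rw [add_pow, mul_sum, sum_div, neg_add, exp_add]
  refine sum_congr rfl fun j hj => ?_
  have hj := mem_range_succ_iff.mp hj
  have hfact : (n ! : ℝ) = n.choose j * j ! * (n - j)! := by
    exact_mod_cast (Nat.choose_mul_factorial_mul_factorial hj).symm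
  have : (n.choose j : ℝ) ≠ 0 := by exact_mod_cast (Nat.choose_pos hj).ne'
  rw [hfact]
  field_simp

lemma hasDerivAt_sum_poissonProb_mul_poissonTail (n : ℕ) (q a x : ℝ) :
    HasDerivAt (fun x => ∑ j ∈ range (n + 1), poissonProb j q * poissonTail (n + 1 - j) (a * x))
      (a * poissonProb n (q + a * x)) x := by
  have hterm : ∀ j ∈ range (n + 1), HasDerivAt
      (fun x => poissonProb j q * poissonTail (n + 1 - j) (a * x))
      (poissonProb j q * (poissonProb (n - j) (a * x) * a)) x := by
    intro j hj
    rw [Nat.sub_add_comm (mem_range_succ_iff.mp hj)]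
    exact ((hasDerivAt_poissonTail _ _).comp x
      (((hasDerivAt_id x).const_mul a).congr_deriv (mul_one a))).const_mul _
  refine (HasDerivAt.fun_sum hterm).congr_deriv ?_
  rw [← sum_poissonProb_mul_poissonProb, mul_sum]
  exact sum_congr rfl fun j _ => by ring

lemma antitoneOn_poissonProb (n : ℕ) : AntitoneOn (poissonProb n) (Set.Ici n) := by
  have hderiv : ∀ t : ℝ, HasDerivAt (poissonProb n)
      (exp (-t) * (n * t ^ (n - 1) - t ^ n) / n !) t := fun t => by
    refine (((hasDerivAt_neg t).exp.mul (hasDerivAt_pow n t)).div_const _).congr_deriv ?_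
    ring
  refine antitoneOn_of_deriv_nonpos (convex_Ici _)
    (fun t _ => (hderiv t).continuousAt.continuousWithinAt)
    (fun t _ => (hderiv t).differentiableAt.differentiableWithinAt) fun t ht => ?_
  rw [interior_Ici, Set.mem_Ioi] at ht
  rw [(hderiv t).deriv]
  refine div_nonpos_of_nonpos_of_nonneg (mul_nonpos_of_nonneg_of_nonpos (exp_pos _).le ?_)
    (Nat.cast_nonneg _)
  cases n with
  | zero => simp
  | succ m =>
    rw [Nat.add_sub_cancel, pow_succ']
    have := pow_nonneg (ht.le.trans' (Nat.cast_nonneg _)) m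
    nlinarith

lemma antitoneOn_poissonProb_add_mul {n : ℕ} {q a : ℝ} (hq : n ≤ q) (ha : 0 ≤ a) :
    AntitoneOn (fun x => poissonProb n (q + a * x)) (Set.Ici 0) := by
  have hmem : ∀ x ∈ Set.Ici (0 : ℝ), q + a * x ∈ Set.Ici (n : ℝ) := fun x hx =>
    Set.mem_Ici.mpr (by nlinarith [Set.mem_Ici.mp hx])
  exact fun x hx y hy hxy => antitoneOn_poissonProb n (hmem x hx) (hmem y hy) (by gcongr)

/-- The paper's `f_k` for `k = n + 2`. -/
noncomputable def coreF (n : ℕ) (d p x : ℝ) : ℝ :=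
  (1 - p)⁻¹ *
    ∑ j ∈ range (n + 1), poissonProb j (d * p) * poissonTail (n + 1 - j) (d * (1 - p) * x)

lemma coreF_eq (n : ℕ) (d p : ℝ) : coreF n d p = fun x => ∑ j ∈ range (n + 1),
    ((d * p) ^ j / ((1 - p) * j ! * exp (d * p))) *
      (1 - exp (-(d * (1 - p) * x)) * ∑ i ∈ range (n + 1 - j), (d * (1 - p) * x) ^ i / i !) := by
  funext x
  rw [coreF, mul_sum]
  refine sum_congr rfl fun j _ => ?_
  rw [poissonProb, poissonTail, exp_neg (d * p), div_eq_mul_inv _ ((1 - p) * _ * _), mul_inv,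
    mul_inv]
  ring

lemma hasDerivAt_coreF (n : ℕ) (d : ℝ) {p : ℝ} (hp : p ≠ 1) (x : ℝ) :
    HasDerivAt (coreF n d p) (d * poissonProb n (d * p + d * (1 - p) * x)) x := by
  have : 1 - p ≠ 0 := sub_ne_zero.mpr hp.symm
  refine ((hasDerivAt_sum_poissonProb_mul_poissonTail n _ _ x).const_mul _).congr_deriv ?_
  field_simp

lemma coreF_zero (n : ℕ) (d p : ℝ) : coreF n d p 0 = 0 := by
  rw [coreF, mul_zero, sum_eq_zero fun j hj => ?_, mul_zero]
  rw [Nat.sub_add_comm (mem_range_succ_iff.mp hj), poissonTail_succ_zero, mul_zero]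

theorem stmt15_general (k : ℕ) (hk : 3 ≤ k) (d p : ℝ) (hd : 0 < d) (hp : p ∈ Set.Ioo (0:ℝ) 1)
    (hdp : (k:ℝ) - 2 ≤ d*p)
    (f : ℝ → ℝ)
    (hf : f = fun x => ∑ j ∈ Finset.range (k-1),
      ((d*p)^j / ((1-p) * (Nat.factorial j) * Real.exp (d*p))) *
        (1 - Real.exp (-(d*(1-p)*x)) *
          ∑ i ∈ Finset.range (k-1-j), (d*(1-p)*x)^i / (Nat.factorial i)))
    (hderiv0 : deriv f 0 < 1) :
    MonotoneOn f (Set.Ici 0) ∧ ConcaveOn ℝ (Set.Ici 0) f ∧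
    (∀ x ∈ Set.Ici (0:ℝ), deriv f x < 1) ∧
    (∀ x ∈ Set.Ioc (0:ℝ) 1, f x < x) := by
  obtain ⟨n, rfl⟩ : ∃ n, k = n + 2 := ⟨k - 2, by omega⟩
  have hq : (n : ℝ) ≤ d * p := by push_cast at hdp; linarith
  have ha : 0 ≤ d * (1 - p) := mul_nonneg hd.le (sub_nonneg.mpr hp.2.le)
  rw [show n + 2 - 1 = n + 1 from rfl, ← coreF_eq] at hf
  subst hf
  have hdiff : Differentiable ℝ (coreF n d p) := fun x =>
    (hasDerivAt_coreF n d hp.2.ne x).differentiableAt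
  have hderiv : deriv (coreF n d p) = fun x => d * poissonProb n (d * p + d * (1 - p) * x) :=
    funext fun x => (hasDerivAt_coreF n d hp.2.ne x).deriv
  have hanti : AntitoneOn (deriv (coreF n d p)) (Set.Ici 0) := fun x hx y hy hxy => by
    rw [hderiv]
    exact mul_le_mul_of_nonneg_left (antitoneOn_poissonProb_add_mul hq ha hx hy hxy) hd.le
  have hlt : ∀ x ∈ Set.Ici 0, deriv (coreF n d p) x < 1 := fun x hx =>
    (hanti Set.self_mem_Ici hx hx).trans_lt hderiv0
  refine ⟨monotoneOn_of_deriv_nonneg (convex_Ici 0) hdiff.continuous.continuousOn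
      hdiff.differentiableOn fun x hx => ?_,
    (hanti.mono interior_subset).concaveOn_of_deriv (convex_Ici 0) hdiff.continuous.continuousOn
      hdiff.differentiableOn, hlt, fun x hx => ?_⟩
  · rw [hderiv]
    exact mul_nonneg hd.le (poissonProb_nonneg n
      (add_nonneg (hq.trans' n.cast_nonneg) (mul_nonneg ha (interior_subset hx))))
  · have := (convex_Ici 0).image_sub_lt_mul_sub_of_deriv_lt hdiff.continuous.continuousOn
      hdiff.differentiableOn (fun x hx => hlt x (interior_subset hx)) 0 Set.self_mem_Ici x
      hx.1.le hx.1
    rw [coreF_zero] at this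
    linarith

/-- with f_k(x) = ∑_{j=0}^{k-2} ((dp)^j/((1-p)·j!·e^{dp}))·P[Po(d(1-p)x) ≥ k-1-j],
if p is a fixed point of φ_{d,k} with dp ≥ k-2 and f_k'(0) < 1, then f_k is monotonically
increasing and concave on [0,∞), has derivative < 1 there, and f_k(x) < x for x ∈ (0,1]. -/
theorem stmt15 (k : ℕ) (hk : 3 ≤ k) (d p : ℝ) (hd : 0 < d) (hp : p ∈ Set.Ioo (0:ℝ) 1)
    (hfix : p = 1 - Real.exp (-(d*p)) * ∑ j ∈ Finset.range (k-1), (d*p)^j / (Nat.factorial j))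
    (hdp : (k:ℝ) - 2 ≤ d*p)
    (f : ℝ → ℝ)
    (hf : f = fun x => ∑ j ∈ Finset.range (k-1),
      ((d*p)^j / ((1-p) * (Nat.factorial j) * Real.exp (d*p))) *
        (1 - Real.exp (-(d*(1-p)*x)) *
          ∑ i ∈ Finset.range (k-1-j), (d*(1-p)*x)^i / (Nat.factorial i)))
    (hderiv0 : deriv f 0 < 1) :
    MonotoneOn f (Set.Ici 0) ∧ ConcaveOn ℝ (Set.Ici 0) f ∧
    (∀ x ∈ Set.Ici (0:ℝ), deriv f x < 1) ∧
    (∀ x ∈ Set.Ioc (0:ℝ) 1, f x < x) :=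
  stmt15_general k hk d p hd hp hdp f hf hderiv0
end
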